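/- Let E ⊂ ℝ^n be a closed set, k ≥ 1, 0 < α ≤ 1, and f : E → ℝ. Suppose for each x ∈ E there is a polynomial P_x of degree ≤ k with P_x(x) = f(x) and |D^i P_x(x) - D^i P_y(x)| ≤ K |x - y|^{k+α-i} for all x, y ∈ E and 0 ≤ i ≤ k. Then for all x, y ∈ E, all z ∈ ℝ^n, and all 0 ≤ i ≤ k, |D^i P_x(z) - D^i P_y(z)| ≤ C K Σ_{l=0}^{k-i} |x-y|^{k+α-i-l} |x-z|^l, with C depending only on n and k. -/

import Mathlib

/-!
`P_x - P_y` is a polynomial of degree at most `k`, so it is its own finite power series at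
every point, and so is its `i`-th derivative, now of order `k - i`. Taylor's formula at `x`
is therefore exact, whence
`|D^i (P_x - P_y)(z)| ≤ Σ_{l ≤ k-i} |D^{i+l} (P_x - P_y)(x)| |z - x|^l / l!`,
and the hypothesis bounds each coefficient by `K |x - y|^{k+α-i-l}`. One may take `C = 1`.
-/

open MeasureTheory Metric

noncomputable section

abbrev Euc (n : ℕ) := EuclideanSpace ℝ (Fin n)

/-- `P` is (the function given by) a polynomial on `ℝ^n` of total degree at most `k`. -/
def IsPolyDeg (n k : ℕ) (P : Euc n → ℝ) : Prop :=
  ∃ q : MvPolynomial (Fin n) ℝ, q.totalDegree ≤ k ∧ ∀ x : Euc n, P x = MvPolynomial.eval (fun i => x i) q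

open Finset
open scoped Nat

section FinitePowerSeries

variable {𝕜 E F : Type*} [NontriviallyNormedField 𝕜] [NormedAddCommGroup E] [NormedSpace 𝕜 E]
  [NormedAddCommGroup F] [NormedSpace 𝕜 F]
  {f : E → F} {p : FormalMultilinearSeries 𝕜 E F} {x : E} {N : ℕ} {r : ENNReal}

theorem norm_iteratedFDeriv_iteratedFDeriv (f : E → F) (i j : ℕ) (x : E) :
    ‖iteratedFDeriv 𝕜 j (iteratedFDeriv 𝕜 i f) x‖ = ‖iteratedFDeriv 𝕜 (i + j) f x‖ := by
  induction i generalizing j with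
  | zero =>
    rw [iteratedFDeriv_zero_eq_comp, LinearIsometryEquiv.norm_iteratedFDeriv_comp_left,
      Nat.zero_add]
  | succ i ih =>
    rw [iteratedFDeriv_succ_eq_comp_left,
      LinearIsometryEquiv.norm_iteratedFDeriv_comp_left (𝕜 := 𝕜)
        (continuousMultilinearCurryLeftEquiv 𝕜 (fun _ : Fin (i + 1) => E) F).symm
        (fderiv 𝕜 (iteratedFDeriv 𝕜 i f)) x j,
      norm_iteratedFDeriv_fderiv, ih, Nat.add_right_comm, Nat.add_assoc]

theorem HasFiniteFPowerSeriesOnBall.exists_iteratedFDeriv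
    (h : HasFiniteFPowerSeriesOnBall f p x N r) (i : ℕ) :
    ∃ q : FormalMultilinearSeries 𝕜 E (ContinuousMultilinearMap 𝕜 (fun _ : Fin i => E) F),
      HasFiniteFPowerSeriesOnBall (iteratedFDeriv 𝕜 i f) q x (N - i) r := by
  induction i with
  | zero =>
    rw [iteratedFDeriv_zero_eq_comp, Nat.sub_zero]
    exact ⟨_, (continuousMultilinearCurryFin0 𝕜 E F).symm.toContinuousLinearEquiv
      |>.toContinuousLinearMap.comp_hasFiniteFPowerSeriesOnBall h⟩
  | succ i ih =>
    obtain ⟨q, hq⟩ := ih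
    rw [iteratedFDeriv_succ_eq_comp_left, Nat.sub_succ]
    exact ⟨_, (continuousMultilinearCurryLeftEquiv 𝕜 (fun _ : Fin (i + 1) => E) F).symm
      |>.toContinuousLinearEquiv.toContinuousLinearMap.comp_hasFiniteFPowerSeriesOnBall hq.fderiv'⟩

theorem HasFiniteFPowerSeriesOnBall.eq_sum_iteratedFDeriv [CharZero 𝕜] [CompleteSpace F]
    (h : HasFiniteFPowerSeriesOnBall f p x N r) {y : E} (hy : y ∈ eball 0 r) :
    f (x + y) = ∑ m ∈ range N, (m ! : 𝕜)⁻¹ • iteratedFDeriv 𝕜 m f x fun _ => y := by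
  rw [h.sum hy, p.sum_of_finite h.finite]
  refine sum_congr rfl fun m _ => ?_
  rw [← h.toHasFPowerSeriesOnBall.factorial_smul, ← Nat.cast_smul_eq_nsmul 𝕜, smul_smul,
    inv_mul_cancel₀ (by exact_mod_cast m.factorial_ne_zero), one_smul]

theorem ContinuousMultilinearMap.hasFiniteFPowerSeriesOnBall_diag {m : ℕ}
    (g : ContinuousMultilinearMap 𝕜 (fun _ : Fin m => E) F) :
    HasFiniteFPowerSeriesOnBall (fun y => g fun _ => y)
      (Function.update (0 : FormalMultilinearSeries 𝕜 E F) m g) 0 (m + 1) ⊤ := by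
  set p : FormalMultilinearSeries 𝕜 E F := Function.update 0 m g
  have hp : ∀ j, m + 1 ≤ j → p j = 0 := fun j hj => Function.update_of_ne (by omega) _ _
  refine (p.hasFiniteFPowerSeriesOnBall_of_finite hp).congr fun y _ => ?_
  rw [p.sum_of_finite hp, FormalMultilinearSeries.partialSum,
    sum_eq_single_of_mem m (self_mem_range_succ m) fun j _ hj => by
      rw [show p j = 0 from Function.update_of_ne hj _ _]; rfl,
    show p m = g from Function.update_self _ _ _]

theorem exists_hasFiniteFPowerSeriesOnBall_prod {ι : Type*} [Fintype ι] (ℓ : ι → E →L[𝕜] 𝕜) :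
    ∃ p : FormalMultilinearSeries 𝕜 E 𝕜,
      HasFiniteFPowerSeriesOnBall (fun y => ∏ j, ℓ j y) p 0 (Fintype.card ι + 1) ⊤ := by
  let e := Fintype.equivFin ι
  let g := (ContinuousMultilinearMap.mkPiAlgebra 𝕜 (Fin (Fintype.card ι)) 𝕜).compContinuousLinearMap
    fun j => ℓ (e.symm j)
  refine ⟨_, g.hasFiniteFPowerSeriesOnBall_diag.congr fun y _ => ?_⟩
  simp only [g, ContinuousMultilinearMap.compContinuousLinearMap_apply,
    ContinuousMultilinearMap.mkPiAlgebra_apply]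
  exact e.symm.prod_comp fun j => ℓ j y

theorem exists_hasFiniteFPowerSeriesOnBall_finsetSum {ι : Type*} (s : Finset ι) (f : ι → E → F)
    (hf : ∀ a ∈ s, ∃ p : FormalMultilinearSeries 𝕜 E F,
      HasFiniteFPowerSeriesOnBall (f a) p 0 N ⊤) :
    ∃ p : FormalMultilinearSeries 𝕜 E F,
      HasFiniteFPowerSeriesOnBall (fun y => ∑ a ∈ s, f a y) p 0 N ⊤ := by
  classical
  induction s using Finset.induction_on with
  | empty =>
    refine ⟨0, (FormalMultilinearSeries.hasFiniteFPowerSeriesOnBall_of_finite 0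
      (n := N) fun _ _ => rfl).congr fun y _ => ?_⟩
    simp [FormalMultilinearSeries.sum]
  | insert a s ha ih =>
    obtain ⟨p, hp⟩ := hf a (mem_insert_self a s)
    obtain ⟨q, hq⟩ := ih fun b hb => hf b (mem_insert_of_mem hb)
    have hpq := hp.add hq
    rw [max_self] at hpq
    simp only [sum_insert ha]
    exact ⟨p + q, hpq⟩

end FinitePowerSeries

section RCLike

variable {𝕜 ι : Type*} [RCLike 𝕜]

theorem HasFiniteFPowerSeriesOnBall.norm_le_sum_norm_iteratedFDeriv {E F : Type*}
    [NormedAddCommGroup E] [NormedSpace 𝕜 E] [NormedAddCommGroup F] [NormedSpace 𝕜 F]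
    [CompleteSpace F] {f : E → F} {p : FormalMultilinearSeries 𝕜 E F} {x : E} {N : ℕ}
    {r : ENNReal} (h : HasFiniteFPowerSeriesOnBall f p x N r) {y : E} (hy : y ∈ eball 0 r) :
    ‖f (x + y)‖ ≤ ∑ m ∈ range N, (m ! : ℝ)⁻¹ * ‖iteratedFDeriv 𝕜 m f x‖ * ‖y‖ ^ m := by
  rw [h.eq_sum_iteratedFDeriv hy]
  refine (norm_sum_le _ _).trans (sum_le_sum fun m _ => ?_)
  rw [norm_smul, norm_inv, RCLike.norm_natCast, mul_assoc]
  gcongr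
  simpa using (iteratedFDeriv 𝕜 m f x).le_opNorm fun _ => y

theorem EuclideanSpace.exists_hasFiniteFPowerSeriesOnBall_monomial [Fintype ι] (σ : ι →₀ ℕ) :
    ∃ p : FormalMultilinearSeries 𝕜 (EuclideanSpace 𝕜 ι) 𝕜,
      HasFiniteFPowerSeriesOnBall (fun y : EuclideanSpace 𝕜 ι => σ.prod fun i e => y i ^ e)
        p 0 ((σ.sum fun _ e => e) + 1) ⊤ := by
  obtain ⟨p, hp⟩ := exists_hasFiniteFPowerSeriesOnBall_prod
    fun t : Σ i, Fin (σ i) => EuclideanSpace.proj (𝕜 := 𝕜) t.1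
  simp only [Fintype.card_sigma, Fintype.card_fin] at hp
  rw [Finsupp.sum_fintype _ _ fun _ => rfl]
  refine ⟨p, hp.congr fun y _ => ?_⟩
  rw [Finsupp.prod_fintype _ _ fun _ => pow_zero _]
  simp [Fintype.prod_sigma]

end RCLike

namespace IsPolyDeg

variable {n k : ℕ} {P : Euc n → ℝ}

theorem exists_hasFiniteFPowerSeriesOnBall (hP : IsPolyDeg n k P) (x : Euc n) :
    ∃ p : FormalMultilinearSeries ℝ (Euc n) ℝ, HasFiniteFPowerSeriesOnBall P p x (k + 1) ⊤ := by
  obtain ⟨q, hq, hPq⟩ := hP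
  obtain ⟨p, hp⟩ : ∃ p : FormalMultilinearSeries ℝ (Euc n) ℝ,
      HasFiniteFPowerSeriesOnBall P p 0 (k + 1) ⊤ := by
    simp only [funext hPq, MvPolynomial.eval_eq]
    refine exists_hasFiniteFPowerSeriesOnBall_finsetSum _ _ fun σ hσ => ?_
    obtain ⟨p, hp⟩ := EuclideanSpace.exists_hasFiniteFPowerSeriesOnBall_monomial (𝕜 := ℝ) σ
    exact ⟨_, ((ContinuousLinearMap.mul ℝ ℝ (q.coeff σ)).comp_hasFiniteFPowerSeriesOnBall hp).of_le
      (by have := MvPolynomial.le_totalDegree hσ; omega)⟩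
  have hpx := hp.changeOrigin (y := x) (by simp)
  rw [zero_add, ENNReal.top_sub_coe] at hpx
  exact ⟨_, hpx⟩

theorem contDiff (hP : IsPolyDeg n k P) {m : WithTop ℕ∞} : ContDiff ℝ m P := by
  obtain ⟨p, hp⟩ := hP.exists_hasFiniteFPowerSeriesOnBall 0
  have hP_analytic := hp.cpolynomialOn.analyticOnNhd
  rw [eball_top] at hP_analytic
  exact hP_analytic.contDiff

end IsPolyDeg

theorem whitney_poly_comparison_general (n k : ℕ) :
    ∃ C > 0, ∀ α : ℝ, 0 < α → α ≤ 1 → ∀ (E : Set (Euc n)), IsClosed E →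
      ∀ (f : Euc n → ℝ) (K : ℝ) (P : Euc n → Euc n → ℝ),
      (∀ x ∈ E, IsPolyDeg n k (P x) ∧ P x x = f x) →
      (∀ x ∈ E, ∀ y ∈ E, ∀ i ≤ k,
        ‖iteratedFDeriv ℝ i (P x) x - iteratedFDeriv ℝ i (P y) x‖ ≤
          K * dist x y ^ ((k : ℝ) + α - i)) →
      ∀ x ∈ E, ∀ y ∈ E, ∀ z : Euc n, ∀ i ≤ k,
        ‖iteratedFDeriv ℝ i (P x) z - iteratedFDeriv ℝ i (P y) z‖ ≤
          C * K * ∑ l ∈ Finset.range (k - i + 1),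
            dist x y ^ ((k : ℝ) + α - i - l) * dist x z ^ (l : ℕ) := by
  refine ⟨1, one_pos, fun α _ _ E _ f K P hP hcomp x hx y hy z i hi => ?_⟩
  have hPx := (hP x hx).1
  have hPy := (hP y hy).1
  have hderiv_sub : ∀ j w, iteratedFDeriv ℝ j (P x - P y) w =
      iteratedFDeriv ℝ j (P x) w - iteratedFDeriv ℝ j (P y) w := fun j w =>
    iteratedFDeriv_sub_apply hPx.contDiff.contDiffAt hPy.contDiff.contDiffAt
  obtain ⟨px, hpx⟩ := hPx.exists_hasFiniteFPowerSeriesOnBall x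
  obtain ⟨py, hpy⟩ := hPy.exists_hasFiniteFPowerSeriesOnBall x
  obtain ⟨q, hq⟩ := (max_self (k + 1) ▸ hpx.sub hpy).exists_iteratedFDeriv i
  have hTaylor := hq.norm_le_sum_norm_iteratedFDeriv (y := z - x) (by simp)
  rw [add_sub_cancel, hderiv_sub, show k + 1 - i = k - i + 1 by omega] at hTaylor
  refine hTaylor.trans ?_
  rw [one_mul, Finset.mul_sum]
  refine Finset.sum_le_sum fun m hm => ?_
  have hm : i + m ≤ k := by rw [Finset.mem_range] at hm; omega
  have hterm : ‖iteratedFDeriv ℝ m (iteratedFDeriv ℝ i (P x - P y)) x‖ ≤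
      K * dist x y ^ ((k : ℝ) + α - i - m) := by
    rw [norm_iteratedFDeriv_iteratedFDeriv, hderiv_sub, sub_sub, ← Nat.cast_add]
    exact hcomp x hx y hy (i + m) hm
  calc (m ! : ℝ)⁻¹ * ‖iteratedFDeriv ℝ m (iteratedFDeriv ℝ i (P x - P y)) x‖ * ‖z - x‖ ^ m
      ≤ 1 * (K * dist x y ^ ((k : ℝ) + α - i - m)) * dist x z ^ m := by
        rw [← dist_eq_norm, dist_comm]
        gcongr
        exact inv_le_one_of_one_le₀ (by exact_mod_cast m.factorial_pos)
    _ = K * (dist x y ^ ((k : ℝ) + α - i - m) * dist x z ^ m) := by ring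

/-- Whitney compatibility propagated to all of `ℝ^n`: if the Whitney-type compatibility
conditions hold at the base points, then for all `x, y ∈ E`, `z ∈ ℝ^n`, `0 ≤ i ≤ k`,
`|D^i P_x(z) - D^i P_y(z)| ≤ C K Σ_{l=0}^{k-i} |x-y|^{k+α-i-l} |x-z|^l`, `C = C(n,k)`. -/
theorem whitney_poly_comparison (n k : ℕ) (hk : 1 ≤ k) :
    ∃ C > 0, ∀ α : ℝ, 0 < α → α ≤ 1 → ∀ (E : Set (Euc n)), IsClosed E →
      ∀ (f : Euc n → ℝ) (K : ℝ) (P : Euc n → Euc n → ℝ),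
      (∀ x ∈ E, IsPolyDeg n k (P x) ∧ P x x = f x) →
      (∀ x ∈ E, ∀ y ∈ E, ∀ i ≤ k,
        ‖iteratedFDeriv ℝ i (P x) x - iteratedFDeriv ℝ i (P y) x‖ ≤
          K * dist x y ^ ((k : ℝ) + α - i)) →
      ∀ x ∈ E, ∀ y ∈ E, ∀ z : Euc n, ∀ i ≤ k,
        ‖iteratedFDeriv ℝ i (P x) z - iteratedFDeriv ℝ i (P y) z‖ ≤
          C * K * ∑ l ∈ Finset.range (k - i + 1),
            dist x y ^ ((k : ℝ) + α - i - l) * dist x z ^ (l : ℕ) :=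
  whitney_poly_comparison_general n k
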